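/- Let S be a finite set of positive integers and u, v : S → {0,1} two distinct functions. Let H = { j ∈ S : u_j = 1, v_j = 0 } and K = { j ∈ S : u_j = 0, v_j = 1 }. If ∏_{j∈S}(X^j+1)^{u_j} = ∏_{j∈S}(X^j+1)^{v_j} in F_2[X], then ∏_{h∈H}(X^h+1) = ∏_{k∈K}(X^k+1) with H, K disjoint and not both empty, which is a contradiction; hence the two products are distinct polynomials. -/

import Mathlib

/-!
Cancelling the common factors leaves `∏_{j ∈ H} (X^j + 1) = ∏_{j ∈ K} (X^j + 1)` with `H`, `K`
disjoint. If `e` is the least element of `H ∪ K`, the coefficient of `X^e` in such a product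
is `1` exactly when `e` belongs to the index set, since `X^e` cannot be written as a product of
several `X^j` with `j ≥ e > 0`; so it distinguishes the two sides.
-/

open Polynomial

theorem Finset.prod_pow_eq_prod_filter_of_le_one {ι M : Type*} [CommMonoid M] (s : Finset ι)
    (f : ι → M) (w : ι → ℕ) (hw : ∀ i, w i ≤ 1) :
    ∏ i ∈ s, f i ^ w i = ∏ i ∈ s with w i = 1, f i := by
  rw [Finset.prod_filter]
  refine Finset.prod_congr rfl fun i _ => ?_
  rcases Nat.le_one_iff_eq_zero_or_eq_one.mp (hw i) with h | h <;> simp [h]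

theorem Finset.prod_sdiff_eq_prod_sdiff {ι M : Type*} [CommMonoidWithZero M]
    [Nontrivial M] [IsCancelMulZero M] [DecidableEq ι] {A B : Finset ι} {f : ι → M} (hf : ∀ i ∈ A ∩ B, f i ≠ 0)
    (h : ∏ i ∈ A, f i = ∏ i ∈ B, f i) :
    ∏ i ∈ A \ B, f i = ∏ i ∈ B \ A, f i := by
  refine mul_right_cancel₀ (Finset.prod_ne_zero_iff.mpr hf) ?_
  rwa [← Finset.prod_union (Finset.disjoint_sdiff_inter A B), Finset.sdiff_union_inter,
    Finset.inter_comm, ← Finset.prod_union (Finset.disjoint_sdiff_inter B A),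
    Finset.sdiff_union_inter]

namespace Polynomial

variable {R : Type*}

theorem X_pow_add_one_ne_zero [Semiring R] [Nontrivial R] {j : ℕ} (hj : 0 < j) :
    (X : R[X]) ^ j + 1 ≠ 0 := by
  simpa using (monic_X_pow_add_C (1 : R) hj.ne').ne_zero

theorem coeff_prod_X_pow_add_one_of_le [CommSemiring R] {T : Finset ℕ} {e : ℕ} (he : 0 < e)
    (hT : ∀ j ∈ T, e ≤ j) :
    (∏ j ∈ T, ((X : R[X]) ^ j + 1)).coeff e = if e ∈ T then 1 else 0 := by
  induction T using Finset.induction_on with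
  | empty => simp [coeff_one, he.ne']
  | insert a T haT ih =>
    have hea : e ≤ a := hT a (Finset.mem_insert_self a T)
    have ih := ih fun j hj => hT j (Finset.mem_insert_of_mem hj)
    have hconst : (∏ j ∈ T, ((X : R[X]) ^ j + 1)).coeff 0 = 1 := by
      rw [coeff_zero_prod]
      refine Finset.prod_eq_one fun j hj => ?_
      simp [coeff_one, coeff_X_pow, (he.trans_le (hT j (Finset.mem_insert_of_mem hj))).ne]
    rw [Finset.prod_insert haT, add_mul, one_mul, coeff_add, coeff_X_pow_mul', ih]
    rcases hea.eq_or_lt with rfl | hlt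
    · simp [hconst, haT]
    · simp [hlt.not_ge, hlt.ne]

theorem prod_X_pow_add_one_ne_of_disjoint [CommSemiring R] [Nontrivial R] {H K : Finset ℕ}
    (hH : ∀ j ∈ H, 0 < j) (hK : ∀ j ∈ K, 0 < j) (hHK : Disjoint H K)
    (hne : (H ∪ K).Nonempty) :
    ∏ j ∈ H, ((X : R[X]) ^ j + 1) ≠ ∏ j ∈ K, ((X : R[X]) ^ j + 1) := by
  set e := (H ∪ K).min' hne
  have hmem : e ∈ H ∪ K := (H ∪ K).min'_mem hne
  have hpos : 0 < e := (Finset.mem_union.mp hmem).elim (hH e) (hK e)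
  have hle (j) (hj : j ∈ H ∪ K) : e ≤ j := (H ∪ K).min'_le j hj
  intro h
  have hcoeff := congrArg (coeff · e) h
  rw [coeff_prod_X_pow_add_one_of_le hpos fun j hj => hle j (Finset.mem_union_left K hj),
    coeff_prod_X_pow_add_one_of_le hpos fun j hj => hle j (Finset.mem_union_right H hj)] at hcoeff
  rcases Finset.mem_union.mp hmem with heH | heK
  · simp [heH, Finset.disjoint_left.mp hHK heH] at hcoeff
  · simp [heK, Finset.disjoint_right.mp hHK heK] at hcoeff

theorem eq_of_prod_X_pow_add_one_eq [CommRing R] [IsDomain R] {A B : Finset ℕ}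
    (hA : ∀ j ∈ A, 0 < j) (hB : ∀ j ∈ B, 0 < j)
    (h : ∏ j ∈ A, ((X : R[X]) ^ j + 1) = ∏ j ∈ B, ((X : R[X]) ^ j + 1)) : A = B := by
  by_contra hAB
  refine prod_X_pow_add_one_ne_of_disjoint (fun j hj => hA j (Finset.sdiff_subset hj))
    (fun j hj => hB j (Finset.sdiff_subset hj)) disjoint_sdiff_sdiff ?_
    (Finset.prod_sdiff_eq_prod_sdiff
      (fun j hj => X_pow_add_one_ne_zero (hA j (Finset.mem_inter.mp hj).1)) h)
  rw [Finset.nonempty_iff_ne_empty, Ne, Finset.union_eq_empty, Finset.sdiff_eq_empty_iff_subset,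
    Finset.sdiff_eq_empty_iff_subset]
  exact fun ⟨hAB', hBA⟩ => hAB (hAB'.antisymm hBA)

end Polynomial

theorem stmt_14 (S : Finset ℕ) (hS : ∀ j ∈ S, 0 < j)
    (u v : ℕ → ℕ) (hu : ∀ j, u j ≤ 1) (hv : ∀ j, v j ≤ 1)
    (hne : ∃ j ∈ S, u j ≠ v j) :
    ∏ j ∈ S, ((X : Polynomial (ZMod 2)) ^ j + 1) ^ u j ≠
      ∏ j ∈ S, ((X : Polynomial (ZMod 2)) ^ j + 1) ^ v j := by
  intro h
  rw [Finset.prod_pow_eq_prod_filter_of_le_one _ _ _ hu,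
    Finset.prod_pow_eq_prod_filter_of_le_one _ _ _ hv] at h
  have hsets := eq_of_prod_X_pow_add_one_eq (fun j hj => hS j (Finset.mem_filter.mp hj).1)
    (fun j hj => hS j (Finset.mem_filter.mp hj).1) h
  obtain ⟨j, hj, huv⟩ := hne
  have hiff : u j = 1 ↔ v j = 1 := by
    simpa [hj] using Finset.ext_iff.mp hsets j
  have := hu j
  have := hv j
  omega
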